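/- Let μ be a nonzero positive measure on (0,∞) with ∫ dμ(t)/t < ∞, K its Cauchy transform, a > 0, n ≥ 1. Then G_n(z) = z² + a n² − n² K(z) has at most one zero in the upper half-plane ℂ₊. -/

import Mathlib

/-!
Taking imaginary parts of `z² + c - s K(z) = 0` gives `2 Re z = -s ∫ |z + t|⁻² dν`, while subtracting
the equations for two distinct zeros `z₁, z₂` gives `z₁ + z₂ = -s ∫ ((z₁ + t)(z₂ + t))⁻¹ dν`.
By `|uv| ≤ (|u|² + |v|²)/2` this forces `|z₁ + z₂| ≤ |Re (z₁ + z₂)|`, impossible when both zeros lie in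
the upper half-plane.
-/

open MeasureTheory Complex

noncomputable def cauchyTransform (ν : Measure ℝ) (z : ℂ) : ℂ :=
  ∫ t, (z + t)⁻¹ ∂ν

namespace Complex

lemma add_ofReal_ne_zero {z : ℂ} (hz : z.im ≠ 0) (t : ℝ) : z + t ≠ 0 :=
  fun h => hz (by simpa using congrArg im h)

lemma im_le_norm_add_ofReal {z : ℂ} (hz : 0 ≤ z.im) (t : ℝ) : z.im ≤ ‖z + t‖ := by
  simpa [abs_of_nonneg hz] using abs_im_le_norm (z + t)

lemma norm_inv_add_ofReal_le_inv_im {z : ℂ} (hz : 0 < z.im) (t : ℝ) : ‖(z + t)⁻¹‖ ≤ z.im⁻¹ := by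
  rw [norm_inv]
  exact inv_anti₀ hz (im_le_norm_add_ofReal hz.le t)

lemma norm_inv_add_ofReal_le {z : ℂ} (hz : 0 < z.im) {t : ℝ} (ht : 0 < t) :
    ‖(z + t)⁻¹‖ ≤ (1 + ‖z‖ / z.im) * t⁻¹ := by
  have hw : 0 < ‖z + t‖ := hz.trans_le (im_le_norm_add_ofReal hz.le t)
  have hz_le : ‖z‖ ≤ ‖z‖ / z.im * ‖z + t‖ := by
    rw [div_mul_eq_mul_div, le_div_iff₀ hz]
    exact mul_le_mul_of_nonneg_left (im_le_norm_add_ofReal hz.le t) (norm_nonneg z)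
  have ht_le : t ≤ (1 + ‖z‖ / z.im) * ‖z + t‖ := calc
    t = ‖(z + t) - z‖ := by simp [abs_of_pos ht]
    _ ≤ ‖z + t‖ + ‖z‖ := norm_sub_le _ _
    _ ≤ (1 + ‖z‖ / z.im) * ‖z + t‖ := by linarith
  rw [norm_inv, inv_le_iff_one_le_mul₀ hw, ← mul_rotate, ← div_eq_mul_inv, one_le_div ht]
  linarith

lemma im_inv_add_ofReal (z : ℂ) (t : ℝ) : ((z + t)⁻¹).im = -z.im * ‖(z + t)⁻¹‖ ^ 2 := by
  rw [inv_im, norm_inv, inv_pow, ← normSq_eq_norm_sq]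
  simp [div_eq_mul_inv]

end Complex

lemma integrable_inv_add_ofReal_of_lintegral_inv_lt_top {μ : Measure ℝ}
    (hint : ∫⁻ t in Set.Ioi (0 : ℝ), ENNReal.ofReal t⁻¹ ∂μ < ⊤) {z : ℂ} (hz : 0 < z.im) :
    Integrable (fun t : ℝ => (z + t)⁻¹) (μ.restrict (Set.Ioi 0)) := by
  have hpos : ∀ᵐ t ∂μ.restrict (Set.Ioi 0), (0 : ℝ) < t := ae_restrict_mem measurableSet_Ioi
  have hinv : Integrable (fun t : ℝ => t⁻¹) (μ.restrict (Set.Ioi 0)) :=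
    ⟨measurable_inv.aestronglyMeasurable, (hasFiniteIntegral_iff_ofReal
      (hpos.mono fun t ht => inv_nonneg.2 ht.le)).2 hint⟩
  refine (hinv.const_mul (1 + ‖z‖ / z.im)).mono'
    (measurable_const.add measurable_ofReal).inv.aestronglyMeasurable ?_
  filter_upwards [hpos] with t ht using norm_inv_add_ofReal_le hz ht

section CauchyTransform

variable {ν : Measure ℝ}

lemma integrable_norm_inv_add_ofReal_sq {z : ℂ} (hz : 0 < z.im)
    (hi : Integrable (fun t : ℝ => (z + t)⁻¹) ν) :
    Integrable (fun t : ℝ => ‖(z + t)⁻¹‖ ^ 2) ν := by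
  refine (hi.norm.const_mul z.im⁻¹).mono' (hi.norm.aestronglyMeasurable.pow 2) ?_
  refine ae_of_all _ fun t => ?_
  rw [norm_pow, norm_norm, sq]
  exact mul_le_mul_of_nonneg_right (norm_inv_add_ofReal_le_inv_im hz t) (norm_nonneg _)

lemma im_cauchyTransform {z : ℂ} (hi : Integrable (fun t : ℝ => (z + t)⁻¹) ν) :
    (cauchyTransform ν z).im = -z.im * ∫ t, ‖(z + t)⁻¹‖ ^ 2 ∂ν := by
  rw [cauchyTransform, ← integral_const_mul]
  simp_rw [← im_inv_add_ofReal]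
  exact (integral_im hi).symm

lemma cauchyTransform_sub_cauchyTransform {z₁ z₂ : ℂ} (hz₁ : z₁.im ≠ 0) (hz₂ : z₂.im ≠ 0)
    (hi₁ : Integrable (fun t : ℝ => (z₁ + t)⁻¹) ν) (hi₂ : Integrable (fun t : ℝ => (z₂ + t)⁻¹) ν) :
    cauchyTransform ν z₁ - cauchyTransform ν z₂ =
      (z₂ - z₁) * ∫ t, ((z₁ + t) * (z₂ + t))⁻¹ ∂ν := by
  rw [cauchyTransform, cauchyTransform, ← integral_sub hi₁ hi₂, ← integral_const_mul]
  congr 1 with t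
  have h₁ := add_ofReal_ne_zero hz₁ t
  have h₂ := add_ofReal_ne_zero hz₂ t
  field_simp
  ring

lemma norm_integral_inv_mul_le {z₁ z₂ : ℂ} (hz₁ : 0 < z₁.im) (hz₂ : 0 < z₂.im)
    (hi₁ : Integrable (fun t : ℝ => (z₁ + t)⁻¹) ν) (hi₂ : Integrable (fun t : ℝ => (z₂ + t)⁻¹) ν) :
    ‖∫ t, ((z₁ + t) * (z₂ + t))⁻¹ ∂ν‖ ≤
      ((∫ t, ‖(z₁ + t)⁻¹‖ ^ 2 ∂ν) + ∫ t, ‖(z₂ + t)⁻¹‖ ^ 2 ∂ν) / 2 := by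
  rw [← integral_add (integrable_norm_inv_add_ofReal_sq hz₁ hi₁)
    (integrable_norm_inv_add_ofReal_sq hz₂ hi₂), ← integral_div]
  refine norm_integral_le_of_norm_le (((integrable_norm_inv_add_ofReal_sq hz₁ hi₁).add
    (integrable_norm_inv_add_ofReal_sq hz₂ hi₂)).div_const 2) (ae_of_all _ fun t => ?_)
  rw [mul_inv, norm_mul]
  nlinarith [sq_nonneg (‖(z₁ + t)⁻¹‖ - ‖(z₂ + t)⁻¹‖)]

lemma two_mul_re_eq_of_sq_add_sub_mul_cauchyTransform_eq_zero {c s : ℝ} {z : ℂ} (hz : z.im ≠ 0)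
    (hi : Integrable (fun t : ℝ => (z + t)⁻¹) ν) (he : z ^ 2 + c - s * cauchyTransform ν z = 0) :
    2 * z.re = -s * ∫ t, ‖(z + t)⁻¹‖ ^ 2 ∂ν := by
  have him := congrArg im he
  rw [sub_im, add_im, ofReal_im, im_ofReal_mul, im_cauchyTransform hi, sq, mul_im, zero_im] at him
  apply mul_right_cancel₀ hz
  linear_combination him

theorem eq_of_sq_add_sub_mul_cauchyTransform_eq_zero {c s : ℝ} {z₁ z₂ : ℂ}
    (hz₁ : 0 < z₁.im) (hz₂ : 0 < z₂.im)
    (hi₁ : Integrable (fun t : ℝ => (z₁ + t)⁻¹) ν) (hi₂ : Integrable (fun t : ℝ => (z₂ + t)⁻¹) ν)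
    (he₁ : z₁ ^ 2 + c - s * cauchyTransform ν z₁ = 0)
    (he₂ : z₂ ^ 2 + c - s * cauchyTransform ν z₂ = 0) : z₁ = z₂ := by
  by_contra hne
  set J := ∫ t, ((z₁ + t) * (z₂ + t))⁻¹ ∂ν
  set I₁ := ∫ t, ‖(z₁ + t)⁻¹‖ ^ 2 ∂ν
  set I₂ := ∫ t, ‖(z₂ + t)⁻¹‖ ^ 2 ∂ν
  have hre : (z₁ + z₂).re = -s * ((I₁ + I₂) / 2) := by
    have h₁ := two_mul_re_eq_of_sq_add_sub_mul_cauchyTransform_eq_zero hz₁.ne' hi₁ he₁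
    have h₂ := two_mul_re_eq_of_sq_add_sub_mul_cauchyTransform_eq_zero hz₂.ne' hi₂ he₂
    rw [add_re]
    linarith
  have hsum : z₁ + z₂ = -s * J := by
    have hdiff := cauchyTransform_sub_cauchyTransform hz₁.ne' hz₂.ne' hi₁ hi₂
    refine mul_left_cancel₀ (sub_ne_zero.2 hne) ?_
    linear_combination he₁ - he₂ + (s : ℂ) * hdiff
  have hI : 0 ≤ (I₁ + I₂) / 2 := by positivity
  have hle : ‖z₁ + z₂‖ ≤ |(z₁ + z₂).re| := calc
    ‖z₁ + z₂‖ = |s| * ‖J‖ := by rw [hsum, norm_mul, norm_neg, norm_real, Real.norm_eq_abs]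
    _ ≤ |s| * ((I₁ + I₂) / 2) :=
      mul_le_mul_of_nonneg_left (norm_integral_inv_mul_le hz₁ hz₂ hi₁ hi₂) (abs_nonneg s)
    _ = |(z₁ + z₂).re| := by rw [hre, abs_mul, abs_neg, abs_of_nonneg hI]
  have hlt : |(z₁ + z₂).re| < ‖z₁ + z₂‖ := abs_re_lt_norm.2 (by rw [add_im]; positivity)
  exact hle.not_gt hlt

end CauchyTransform

theorem GP2_at_most_one_zero_upper_half_plane_general
    (μ : Measure ℝ)
    (hint : ∫⁻ t in Set.Ioi (0 : ℝ), ENNReal.ofReal t⁻¹ ∂μ < ⊤)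
    (K : ℂ → ℂ) (hK : ∀ z, K z = ∫ t in Set.Ioi (0 : ℝ), (z + (t : ℂ))⁻¹ ∂μ)
    (a : ℝ) (n : ℕ) :
    ∀ z₁ z₂ : ℂ, 0 < z₁.im → 0 < z₂.im →
      z₁ ^ 2 + (a : ℂ) * (n : ℂ) ^ 2 - (n : ℂ) ^ 2 * K z₁ = 0 →
      z₂ ^ 2 + (a : ℂ) * (n : ℂ) ^ 2 - (n : ℂ) ^ 2 * K z₂ = 0 → z₁ = z₂ := by
  obtain rfl : K = cauchyTransform (μ.restrict (Set.Ioi 0)) := funext hK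
  intro z₁ z₂ hz₁ hz₂ he₁ he₂
  refine eq_of_sq_add_sub_mul_cauchyTransform_eq_zero (c := a * n ^ 2) (s := n ^ 2) hz₁ hz₂
    (integrable_inv_add_ofReal_of_lintegral_inv_lt_top hint hz₁)
    (integrable_inv_add_ofReal_of_lintegral_inv_lt_top hint hz₂) ?_ ?_
  · push_cast; exact he₁
  · push_cast; exact he₂

theorem GP2_at_most_one_zero_upper_half_plane
    (μ : Measure ℝ) (hμ : μ ≠ 0) (hsupp : μ (Set.Iic 0) = 0)
    (hint : ∫⁻ t in Set.Ioi (0 : ℝ), ENNReal.ofReal t⁻¹ ∂μ < ⊤)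
    (K : ℂ → ℂ) (hK : ∀ z, K z = ∫ t in Set.Ioi (0 : ℝ), (z + (t : ℂ))⁻¹ ∂μ)
    (a : ℝ) (ha : 0 < a) (n : ℕ) (hn : 1 ≤ n) :
    ∀ z₁ z₂ : ℂ, 0 < z₁.im → 0 < z₂.im →
      z₁ ^ 2 + (a : ℂ) * (n : ℂ) ^ 2 - (n : ℂ) ^ 2 * K z₁ = 0 →
      z₂ ^ 2 + (a : ℂ) * (n : ℂ) ^ 2 - (n : ℂ) ^ 2 * K z₂ = 0 → z₁ = z₂ :=
  GP2_at_most_one_zero_upper_half_plane_general μ hint K hK a n
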